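/- arXiv:1312.1579 — 3 statements merged into one kernel-verified Lean document; each statement's English description precedes it below -/
import Mathlib

section
/- Fix σ > 1/2 and let α_σ(ξ) = 1 − |ξ|^σ. Then for every κ > 0, the index Λ(κ) computed from α_σ equals 2·κ^{4σ}·σ·(1+σ)⁴·(2^{σ+1} − 3 − σ)/(2^σ − 1). -/
/-- The modulational instability index
`Λ(κ) = 2(2κα'(κ) + κ²α''(κ))(α(κ) − 1 + κα'(κ))³(3α(κ) − 2α(2κ) − 1 + κα'(κ))/(α(κ) − α(2κ))`
associated with a dispersion symbol `α`. -/
noncomputable def LambdaIndex (α : ℝ → ℝ) (κ : ℝ) : ℝ :=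
  2 * (2 * κ * deriv α κ + κ ^ 2 * deriv (deriv α) κ) *
    (α κ - 1 + κ * deriv α κ) ^ 3 *
    (3 * α κ - 2 * α (2 * κ) - 1 + κ * deriv α κ) /
    (α κ - α (2 * κ))

/-- The fractional KdV dispersion symbol `α_σ(ξ) = 1 − |ξ|^σ`. -/
noncomputable def fKdVSymbol (σ : ℝ) (ξ : ℝ) : ℝ := 1 - |ξ| ^ σ

lemma deriv_fKdV (σ : ℝ) {x : ℝ} (hx : 0 < x) :
    deriv (fKdVSymbol σ) x = -(σ * x ^ (σ - 1)) := by
  have h : fKdVSymbol σ =ᶠ[nhds x] fun ξ => 1 - ξ ^ σ := by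
    filter_upwards [lt_mem_nhds hx] with ξ hξ
    simp [fKdVSymbol, abs_of_pos hξ]
  rw [h.deriv_eq]
  have h2 : HasDerivAt (fun ξ : ℝ => 1 - ξ ^ σ) (0 - σ * x ^ (σ - 1)) x := by
    exact (hasDerivAt_const x 1).sub (Real.hasDerivAt_rpow_const (Or.inl hx.ne'))
  simpa using h2.deriv

lemma deriv2_fKdV (σ : ℝ) {x : ℝ} (hx : 0 < x) :
    deriv (deriv (fKdVSymbol σ)) x = -(σ * ((σ - 1) * x ^ (σ - 2))) := by
  have h : deriv (fKdVSymbol σ) =ᶠ[nhds x] fun ξ => -(σ * ξ ^ (σ - 1)) := by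
    filter_upwards [lt_mem_nhds hx] with ξ hξ
    exact deriv_fKdV σ hξ
  rw [h.deriv_eq]
  have h2 : HasDerivAt (fun ξ : ℝ => -(σ * ξ ^ (σ - 1)))
      (-(σ * ((σ - 1) * x ^ (σ - 1 - 1)))) x := by
    exact (((Real.hasDerivAt_rpow_const (Or.inl hx.ne')).const_mul σ)).neg
  have := h2.deriv
  rw [this, show σ - 1 - 1 = σ - 2 by ring]

theorem LambdaIndex_fKdV (σ : ℝ) (hσ : 1 / 2 < σ) (κ : ℝ) (hκ : 0 < κ) :
    LambdaIndex (fKdVSymbol σ) κ =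
      2 * κ ^ (4 * σ) * σ * (1 + σ) ^ 4 * ((2 : ℝ) ^ (σ + 1) - 3 - σ) /
        ((2 : ℝ) ^ σ - 1) := by
  have hX : (0 : ℝ) < κ ^ σ := Real.rpow_pos_of_pos hκ σ
  have ha : (1 : ℝ) < (2 : ℝ) ^ σ := by
    have := Real.one_lt_rpow_iff_of_pos (x := 2) (by norm_num) (y := σ)
    rw [this]; left; constructor <;> linarith
  have ha' : (2 : ℝ) ^ σ - 1 ≠ 0 := by linarith
  have h1 : κ ^ (σ - 1) = κ ^ σ / κ := by
    rw [Real.rpow_sub hκ, Real.rpow_one]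
  have h2 : κ ^ (σ - 2) = κ ^ σ / κ ^ 2 := by
    rw [Real.rpow_sub hκ, show (2:ℝ) = ((2:ℕ):ℝ) by norm_num, Real.rpow_natCast]
  have h3 : (2 * κ) ^ σ = 2 ^ σ * κ ^ σ := Real.mul_rpow (by norm_num) hκ.le
  have h4 : κ ^ (4 * σ) = (κ ^ σ) ^ 4 := by
    rw [show (4 : ℝ) * σ = σ * 4 by ring, Real.rpow_mul hκ.le,
      show (4:ℝ) = ((4:ℕ):ℝ) by norm_num, Real.rpow_natCast]
  have h5 : (2 : ℝ) ^ (σ + 1) = 2 ^ σ * 2 := by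
    rw [Real.rpow_add (by norm_num), Real.rpow_one]
  rw [LambdaIndex, deriv_fKdV σ hκ, deriv2_fKdV σ hκ]
  simp only [fKdVSymbol, abs_of_pos hκ, abs_of_pos (by linarith : (0:ℝ) < 2 * κ)]
  rw [h1, h2, h3, h4, h5]
  have hden : 1 - κ ^ σ - (1 - 2 ^ σ * κ ^ σ) = ((2:ℝ) ^ σ - 1) * κ ^ σ := by ring
  rw [hden]
  field_simp
  ring
end

section
/- Fix H > 0 and let α_H(ξ) = 1 + 1/H − ξ·coth(ξH) for ξ ≠ 0, with α_H(0) = 1. Then for every κ > 0, the index Λ(κ) computed from α_H equals [((−1 + 4H²κ²)·cosh(Hκ) + cosh(3Hκ) − 8Hκ·sinh(Hκ))² / (32·H⁴·sinh(Hκ)^{12})] · (1 − 2H²κ² − cosh(2Hκ) + 2Hκ·sinh(2Hκ))³. -/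
open Real Filter


/-- The dispersion symbol of the intermediate long-wave equation:
`α_H(ξ) = 1 + 1/H − ξ coth(ξH)` for `ξ ≠ 0`, with `α_H(0) = 1`. -/
noncomputable def ILWSymbol (H : ℝ) (ξ : ℝ) : ℝ :=
  if ξ = 0 then 1 else 1 + 1 / H - ξ * (Real.cosh (ξ * H) / Real.sinh (ξ * H))


lemma hasDerivAt_cosh_mul (H ξ : ℝ) :
    HasDerivAt (fun t => Real.cosh (t * H)) (Real.sinh (ξ * H) * H) ξ := by
  simpa [Function.comp_def] using (Real.hasDerivAt_cosh (ξ * H)).comp ξ ((hasDerivAt_id ξ).mul_const H)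

lemma hasDerivAt_sinh_mul (H ξ : ℝ) :
    HasDerivAt (fun t => Real.sinh (t * H)) (Real.cosh (ξ * H) * H) ξ := by
  simpa [Function.comp_def] using (Real.hasDerivAt_sinh (ξ * H)).comp ξ ((hasDerivAt_id ξ).mul_const H)

lemma hasDerivAt_coth_mul (H ξ : ℝ) (hs : Real.sinh (ξ * H) ≠ 0) :
    HasDerivAt (fun t => Real.cosh (t * H) / Real.sinh (t * H))
      (-(H / Real.sinh (ξ * H) ^ 2)) ξ := by
  have h := (hasDerivAt_cosh_mul H ξ).div (hasDerivAt_sinh_mul H ξ) hs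
  refine h.congr_deriv (Eq.symm ?_)
  rw [neg_div', div_left_inj' (pow_ne_zero 2 hs)]
  linear_combination H * Real.cosh_sq_sub_sinh_sq (ξ * H)

lemma hasDerivAt_g (H ξ : ℝ) (hs : Real.sinh (ξ * H) ≠ 0) :
    HasDerivAt (fun t => 1 + 1 / H - t * (Real.cosh (t * H) / Real.sinh (t * H)))
      (-(Real.cosh (ξ * H) / Real.sinh (ξ * H)) + ξ * H / Real.sinh (ξ * H) ^ 2) ξ := by
  have h := (hasDerivAt_const ξ (1 + 1 / H)).sub
    ((hasDerivAt_id ξ).mul (hasDerivAt_coth_mul H ξ hs))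
  refine h.congr_deriv (Eq.symm ?_)
  simp only [id_eq]
  ring

lemma ILW_eventually (H κ : ℝ) (hκ : κ ≠ 0) :
    ILWSymbol H =ᶠ[nhds κ]
      fun t => 1 + 1 / H - t * (Real.cosh (t * H) / Real.sinh (t * H)) := by
  filter_upwards [eventually_ne_nhds hκ] with t ht
  simp [ILWSymbol, ht]

lemma deriv_ILW (H : ℝ) (hH : 0 < H) :
    ∀ κ : ℝ, 0 < κ → deriv (ILWSymbol H) κ =
      -(Real.cosh (κ * H) / Real.sinh (κ * H)) + κ * H / Real.sinh (κ * H) ^ 2 := by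
  intro κ hκ
  have hs : Real.sinh (κ * H) ≠ 0 := Real.sinh_ne_zero.mpr (by positivity)
  rw [(ILW_eventually H κ hκ.ne').deriv_eq]
  exact (hasDerivAt_g H κ hs).deriv

lemma deriv2_ILW (H : ℝ) (hH : 0 < H) (κ : ℝ) (hκ : 0 < κ) :
    deriv (deriv (ILWSymbol H)) κ =
      2 * H / Real.sinh (κ * H) ^ 2 -
        2 * κ * H ^ 2 * Real.cosh (κ * H) / Real.sinh (κ * H) ^ 3 := by
  have hs : Real.sinh (κ * H) ≠ 0 := Real.sinh_ne_zero.mpr (by positivity)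
  have hev : deriv (ILWSymbol H) =ᶠ[nhds κ]
      fun t => -(Real.cosh (t * H) / Real.sinh (t * H)) + t * H / Real.sinh (t * H) ^ 2 := by
    filter_upwards [eventually_gt_nhds hκ] with t ht
    exact deriv_ILW H hH t ht
  rw [hev.deriv_eq]
  have h1 : HasDerivAt (fun t : ℝ => -(Real.cosh (t * H) / Real.sinh (t * H)))
      (H / Real.sinh (κ * H) ^ 2) κ := by
    exact (hasDerivAt_coth_mul H κ hs).neg.congr_deriv (neg_neg _)
  have hs2 : Real.sinh (κ * H) ^ 2 ≠ 0 := pow_ne_zero 2 hs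
  have h2 : HasDerivAt (fun t : ℝ => t * H / Real.sinh (t * H) ^ 2)
      ((H * Real.sinh (κ * H) ^ 2 - κ * H * (2 * Real.sinh (κ * H) ^ 1 * (Real.cosh (κ * H) * H)))
        / (Real.sinh (κ * H) ^ 2) ^ 2) κ := by
    exact HasDerivAt.div (by simpa using (hasDerivAt_id κ).mul_const H)
      ((hasDerivAt_sinh_mul H κ).pow 2) hs2
  have h : HasDerivAt (fun t : ℝ => -(Real.cosh (t * H) / Real.sinh (t * H)) + t * H / Real.sinh (t * H) ^ 2) _ κ := h1.add h2
  rw [h.deriv]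
  field_simp
  ring

theorem LambdaIndex_ILW (H : ℝ) (hH : 0 < H) (κ : ℝ) (hκ : 0 < κ) :
    LambdaIndex (ILWSymbol H) κ =
      ((-1 + 4 * H ^ 2 * κ ^ 2) * Real.cosh (H * κ) + Real.cosh (3 * (H * κ)) -
          8 * (H * κ) * Real.sinh (H * κ)) ^ 2 /
        (32 * H ^ 4 * Real.sinh (H * κ) ^ 12) *
      (1 - 2 * H ^ 2 * κ ^ 2 - Real.cosh (2 * (H * κ)) +
          2 * (H * κ) * Real.sinh (2 * (H * κ))) ^ 3 := by
  have hs : Real.sinh (κ * H) ≠ 0 := Real.sinh_ne_zero.mpr (by positivity)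
  have hsp : 0 < Real.sinh (κ * H) := Real.sinh_pos_iff.mpr (by positivity)
  have hcp : 0 < Real.cosh (κ * H) := Real.cosh_pos _
  set s := Real.sinh (κ * H) with hsdef
  set c := Real.cosh (κ * H) with hcdef
  have hc2 : c ^ 2 - s ^ 2 = 1 := Real.cosh_sq_sub_sinh_sq (κ * H)
  -- values of the symbol
  have hα : ILWSymbol H κ = 1 + 1 / H - κ * (c / s) := by
    rw [ILWSymbol, if_neg hκ.ne']
  have hα2 : ILWSymbol H (2 * κ) =
      1 + 1 / H - 2 * κ * ((c ^ 2 + s ^ 2) / (2 * s * c)) := by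
    rw [ILWSymbol, if_neg (by positivity)]
    rw [show 2 * κ * H = 2 * (κ * H) by ring, Real.cosh_two_mul, Real.sinh_two_mul]
  have hd1 : deriv (ILWSymbol H) κ = -(c / s) + κ * H / s ^ 2 := deriv_ILW H hH κ hκ
  have hd2 : deriv (deriv (ILWSymbol H)) κ =
      2 * H / s ^ 2 - 2 * κ * H ^ 2 * c / s ^ 3 := deriv2_ILW H hH κ hκ
  -- the denominator is nonzero
  have hden : ILWSymbol H κ - ILWSymbol H (2 * κ) = κ * s / c := by
    rw [hα, hα2]
    field_simp
    ring
  have hdenne : ILWSymbol H κ - ILWSymbol H (2 * κ) ≠ 0 := by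
    rw [hden]; positivity
  -- rewrite the right-hand side angles
  rw [show H * κ = κ * H by ring] at *
  rw [LambdaIndex, hα, hα2, hd1, hd2, Real.cosh_three_mul, Real.cosh_two_mul,
    Real.sinh_two_mul, ← hsdef, ← hcdef]
  rw [div_eq_iff (by rw [hα, hα2] at hdenne; exact hdenne)]
  field_simp
  linear_combination (64 * s^4 * κ^3 * H^3 - 384 * s^4 * κ^5 * H^5 + 768 * s^4 * κ^7 * H^7 - 512 * s^4 * κ^9 * H^9 - 256 * s^6 * κ^3 * H^3 + 1152 * s^6 * κ^5 * H^5 - 1536 * s^6 * κ^7 * H^7 + 448 * s^8 * κ^3 * H^3 - 1536 * s^8 * κ^5 * H^5 - 512 * s^10 * κ^3 * H^3 + 64 * c * s^3 * κ^2 * H^2 - 448 * c * s^3 * κ^4 * H^4 + 1152 * c * s^3 * κ^6 * H^6 - 1280 * c * s^3 * κ^8 * H^8 + 256 * c * s^3 * κ^10 * H^10 - 256 * c * s^5 * κ^2 * H^2 + 2176 * c * s^5 * κ^4 * H^4 - 5760 * c * s^5 * κ^6 * H^6 + 4096 * c * s^5 * κ^8 * H^8 + 448 * c * s^7 * κ^2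 * H^2 - 4288 * c * s^7 * κ^4 * H^4 + 7680 * c * s^7 * κ^6 * H^6 - 512 * c * s^9 * κ^2 * H^2 + 4096 * c * s^9 * κ^4 * H^4 + 256 * c * s^11 * κ^2 * H^2 + 16 * c^2 * s^2 * κ * H - 128 * c^2 * s^2 * κ^3 * H^3 + 400 * c^2 * s^2 * κ^5 * H^5 - 608 * c^2 * s^2 * κ^7 * H^7 + 448 * c^2 * s^2 * κ^9 * H^9 - 64 * c^2 * s^4 * κ * H + 1056 * c^2 * s^4 * κ^3 * H^3 - 4480 * c^2 * s^4 * κ^5 * H^5 + 7328 * c^2 * s^4 * κ^7 * H^7 - 1536 * c^2 * s^4 * κ^9 * H^9 + 112 * c^2 * s^6 * κ * H - 2656 * c^2 * s^6 * κ^3 * H^3 + 12784 * c^2 * s^6 * κ^5 * H^5 - 10752 * c^2 * s^6 * κ^7 * H^7 - 128 * c^2 * s^8 * κ * H + 3712 * c^2 * s^8 * κ^3 * H^3 - 10752 * c^2 * s^8 * κ^5 * H^5 + 128 * c^2 * s^10 * κ * H - 1536 * c^2 * s^10 * κ^3 * H^3 - 256 * c^3 * s^3 * κ^4 * H^4 +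 1344 * c^3 * s^3 * κ^6 * H^6 - 2304 * c^3 * s^3 * κ^8 * H^8 - 64 * c^3 * s^5 * κ^2 * H^2 + 3584 * c^3 * s^5 * κ^4 * H^4 - 13632 * c^3 * s^5 * κ^6 * H^6 + 3072 * c^3 * s^5 * κ^8 * H^8 + 320 * c^3 * s^7 * κ^2 * H^2 - 9216 * c^3 * s^7 * κ^4 * H^4 + 10240 * c^3 * s^7 * κ^6 * H^6 - 768 * c^3 * s^9 * κ^2 * H^2 + 3072 * c^3 * s^9 * κ^4 * H^4 - 64 * c^4 * s^2 * κ * H + 384 * c^4 * s^2 * κ^3 * H^3 - 800 * c^4 * s^2 * κ^5 * H^5 + 608 * c^4 * s^2 * κ^7 * H^7 + 192 * c^4 * s^4 * κ * H - 1536 * c^4 * s^4 * κ^3 * H^3 + 1792 * c^4 * s^4 * κ^5 * H^5 + 3840 * c^4 * s^4 * κ^7 * H^7 - 224 * c^4 * s^6 * κ * H + 1376 * c^4 * s^6 * κ^3 * H^3 + 8704 * c^4 * s^6 * κ^5 * H^5 - 2048 * c^4 * s^6 * κ^7 * H^7 + 128 * c^4 * s^8 * κ * H + 1536 * c^4 *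 s^8 * κ^3 * H^3 - 2048 * c^4 * s^8 * κ^5 * H^5 - 384 * c^5 * s^3 * κ^2 * H^2 + 1856 * c^5 * s^3 * κ^4 * H^4 - 2496 * c^5 * s^3 * κ^6 * H^6 + 896 * c^5 * s^5 * κ^2 * H^2 - 4736 * c^5 * s^5 * κ^4 * H^4 - 2048 * c^5 * s^5 * κ^6 * H^6 - 768 * c^5 * s^7 * κ^2 * H^2 - 1024 * c^5 * s^7 * κ^4 * H^4 + 96 * c^6 * s^2 * κ * H - 384 * c^6 * s^2 * κ^3 * H^3 + 400 * c^6 * s^2 * κ^5 * H^5 - 192 * c^6 * s^4 * κ * H - 352 * c^6 * s^4 * κ^3 * H^3 + 3072 * c^6 * s^4 * κ^5 * H^5 + 112 * c^6 * s^6 * κ * H + 1536 * c^6 * s^6 * κ^3 * H^3 + 512 * c^7 * s^3 * κ^2 * H^2 - 1152 * c^7 * s^3 * κ^4 * H^4 - 576 * c^7 * s^5 * κ^2 * H^2 - 1024 * c^7 * s^5 * κ^4 * H^4 - 64 * c^8 * s^2 * κ * H + 128 * c^8 * s^2 * κ^3 * H^3 + 64 * c^8 * s^4 * κ * H + 768 *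 c^8 * s^4 * κ^3 * H^3 - 192 * c^9 * s^3 * κ^2 * H^2 + 16 * c^10 * s^2 * κ * H) * hc2
end

section
/- Fix H > 0 and let α_H(ξ) = 1 + 1/H − ξ·coth(ξH) for ξ ≠ 0, with α_H(0) = 1. Then for every κ > 0, the index Λ(κ) computed from α_H is nonnegative: Λ(κ) ≥ 0. (Hence small-amplitude, periodic traveling waves of the ILW equation are spectrally stable near the origin of the spectral plane.) -/
/-- Smooth branch of the ILW symbol. -/
noncomputable def ilw (H : ℝ) (ξ : ℝ) : ℝ :=
  1 + 1 / H - ξ * (Real.cosh (ξ * H) / Real.sinh (ξ * H))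

/-- First derivative of the smooth branch. -/
noncomputable def ilwD (H : ℝ) (ξ : ℝ) : ℝ :=
  -(Real.cosh (ξ * H) / Real.sinh (ξ * H)) + ξ * H / (Real.sinh (ξ * H)) ^ 2

/-- Second derivative of the smooth branch. -/
noncomputable def ilwDD (H : ℝ) (ξ : ℝ) : ℝ :=
  2 * H / (Real.sinh (ξ * H)) ^ 2 -
    2 * ξ * H ^ 2 * Real.cosh (ξ * H) / (Real.sinh (ξ * H)) ^ 3

lemma hasDerivAt_mulH (H ξ : ℝ) : HasDerivAt (fun t : ℝ => t * H) H ξ := by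
  simpa using (hasDerivAt_id ξ).mul_const H

lemma hasDerivAt_cosh_mulH (H ξ : ℝ) :
    HasDerivAt (fun t : ℝ => Real.cosh (t * H)) (Real.sinh (ξ * H) * H) ξ :=
  by have h := (Real.hasDerivAt_cosh (ξ * H)).comp ξ (hasDerivAt_mulH H ξ); exact h

lemma hasDerivAt_sinh_mulH (H ξ : ℝ) :
    HasDerivAt (fun t : ℝ => Real.sinh (t * H)) (Real.cosh (ξ * H) * H) ξ :=
  by have h := (Real.hasDerivAt_sinh (ξ * H)).comp ξ (hasDerivAt_mulH H ξ); exact h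

lemma hasDerivAt_ilw (H ξ : ℝ) (hs : Real.sinh (ξ * H) ≠ 0) :
    HasDerivAt (ilw H) (ilwD H ξ) ξ := by
  set s := Real.sinh (ξ * H)
  set c := Real.cosh (ξ * H)
  have hq : HasDerivAt (fun t : ℝ => Real.cosh (t * H) / Real.sinh (t * H))
      ((s * H * s - c * (c * H)) / s ^ 2) ξ :=
    (hasDerivAt_cosh_mulH H ξ).div (hasDerivAt_sinh_mulH H ξ) hs
  have hp : HasDerivAt (fun t : ℝ => t * (Real.cosh (t * H) / Real.sinh (t * H)))
      (1 * (c / s) + ξ * ((s * H * s - c * (c * H)) / s ^ 2)) ξ :=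
    (hasDerivAt_id ξ).mul hq
  have h := (hasDerivAt_const ξ (1 + 1 / H)).sub hp
  have hcs : c ^ 2 - s ^ 2 = 1 := Real.cosh_sq_sub_sinh_sq (ξ * H)
  have hval : (0:ℝ) - (1 * (c / s) + ξ * ((s * H * s - c * (c * H)) / s ^ 2)) = ilwD H ξ := by
    unfold ilwD
    change _ = -(c / s) + ξ * H / s ^ 2
    field_simp
    linear_combination (ξ * H) * hcs
  rw [← hval]
  exact h

lemma hasDerivAt_ilwD (H ξ : ℝ) (hs : Real.sinh (ξ * H) ≠ 0) :
    HasDerivAt (ilwD H) (ilwDD H ξ) ξ := by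
  set s := Real.sinh (ξ * H)
  set c := Real.cosh (ξ * H)
  have hq : HasDerivAt (fun t : ℝ => Real.cosh (t * H) / Real.sinh (t * H))
      ((s * H * s - c * (c * H)) / s ^ 2) ξ :=
    (hasDerivAt_cosh_mulH H ξ).div (hasDerivAt_sinh_mulH H ξ) hs
  have hs2 : HasDerivAt (fun t : ℝ => (Real.sinh (t * H)) ^ 2)
      (2 * s ^ 1 * (c * H)) ξ := by
    have h := (hasDerivAt_sinh_mulH H ξ).pow 2; norm_num at h ⊢; exact h
  have hs2ne : s ^ 2 ≠ 0 := pow_ne_zero 2 hs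
  have hq2 : HasDerivAt (fun t : ℝ => t * H / (Real.sinh (t * H)) ^ 2)
      ((H * s ^ 2 - ξ * H * (2 * s ^ 1 * (c * H))) / (s ^ 2) ^ 2) ξ :=
    (hasDerivAt_mulH H ξ).div hs2 hs2ne
  have hcs : c ^ 2 - s ^ 2 = 1 := Real.cosh_sq_sub_sinh_sq (ξ * H)
  have hval : -((s * H * s - c * (c * H)) / s ^ 2) +
      (H * s ^ 2 - ξ * H * (2 * s ^ 1 * (c * H))) / (s ^ 2) ^ 2 = ilwDD H ξ := by
    unfold ilwDD
    change _ = 2 * H / s ^ 2 - 2 * ξ * H ^ 2 * c / s ^ 3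
    field_simp
    linear_combination (H * s) * hcs
  rw [← hval]
  exact (hq.neg).add hq2

lemma ILW_eventuallyEq (H ξ : ℝ) (hξ : ξ ≠ 0) :
    ILWSymbol H =ᶠ[nhds ξ] ilw H := by
  filter_upwards [eventually_ne_nhds hξ] with t ht
  simp [ILWSymbol, ilw, ht]

lemma deriv_ILW_s19 (H : ℝ) (hH : 0 < H) {ξ : ℝ} (hξ : 0 < ξ) :
    deriv (ILWSymbol H) ξ = ilwD H ξ := by
  have hs : Real.sinh (ξ * H) ≠ 0 :=
    ne_of_gt (Real.sinh_pos_iff.mpr (mul_pos hξ hH))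
  rw [(ILW_eventuallyEq H ξ (ne_of_gt hξ)).deriv_eq]
  exact (hasDerivAt_ilw H ξ hs).deriv

lemma deriv2_ILW_s19 (H : ℝ) (hH : 0 < H) {ξ : ℝ} (hξ : 0 < ξ) :
    deriv (deriv (ILWSymbol H)) ξ = ilwDD H ξ := by
  have hs : Real.sinh (ξ * H) ≠ 0 :=
    ne_of_gt (Real.sinh_pos_iff.mpr (mul_pos hξ hH))
  have heq : deriv (ILWSymbol H) =ᶠ[nhds ξ] ilwD H := by
    filter_upwards [Ioi_mem_nhds hξ] with t ht
    exact deriv_ILW_s19 H hH ht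
  rw [heq.deriv_eq]
  exact (hasDerivAt_ilwD H ξ hs).deriv

/-- `sinh x < x * cosh x` for positive `x`. -/
lemma sinh_lt_self_mul_cosh {x : ℝ} (hx : 0 < x) : Real.sinh x < x * Real.cosh x := by
  have hmono : StrictMonoOn (fun t : ℝ => t * Real.cosh t - Real.sinh t) (Set.Ici 0) := by
    apply strictMonoOn_of_deriv_pos (convex_Ici 0)
    · fun_prop
    · intro t ht
      rw [interior_Ici, Set.mem_Ioi] at ht
      have hd : HasDerivAt (fun t : ℝ => t * Real.cosh t - Real.sinh t)
          (1 * Real.cosh t + t * Real.sinh t - Real.cosh t) t :=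
        ((hasDerivAt_id t).mul (Real.hasDerivAt_cosh t)).sub (Real.hasDerivAt_sinh t)
      rw [hd.deriv]
      have := Real.sinh_pos_iff.mpr ht
      nlinarith
  have := hmono (Set.self_mem_Ici) (Set.mem_Ici.mpr hx.le) hx
  simp only [Real.sinh_zero, Real.cosh_zero, mul_one, zero_mul, sub_zero, zero_sub, neg_zero] at this
  linarith

set_option maxHeartbeats 1000000 in
/-- Small-amplitude periodic traveling waves of the intermediate long-wave equation are
spectrally stable near the origin: the index `Λ(κ)` is nonnegative. -/
theorem LambdaIndex_ILW_nonneg (H : ℝ) (hH : 0 < H) (κ : ℝ) (hκ : 0 < κ) :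
    0 ≤ LambdaIndex (ILWSymbol H) κ := by
  set x : ℝ := κ * H with hxdef
  have hx : 0 < x := mul_pos hκ hH
  set s : ℝ := Real.sinh x with hsdef
  set c : ℝ := Real.cosh x with hcdef
  have hs : 0 < s := Real.sinh_pos_iff.mpr hx
  have hc : 0 < c := Real.cosh_pos x
  have hc1 : 1 < c := Real.one_lt_cosh.mpr (ne_of_gt hx)
  have hxs : x < s := Real.self_lt_sinh_iff.mpr hx
  have hsxc : s < x * c := sinh_lt_self_mul_cosh hx
  have hpyth : c ^ 2 - s ^ 2 = 1 := Real.cosh_sq_sub_sinh_sq x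
  -- values
  have hκne : κ ≠ 0 := ne_of_gt hκ
  have h2κ : (0:ℝ) < 2 * κ := by linarith
  have hsne : s ≠ 0 := ne_of_gt hs
  have hcne : c ≠ 0 := ne_of_gt hc
  have hHne : H ≠ 0 := ne_of_gt hH
  have hvalκ : ILWSymbol H κ = 1 + 1 / H - κ * (c / s) := by
    simp [ILWSymbol, hκne, hsdef, hcdef, hxdef]
  have hval2 : ILWSymbol H (2 * κ) = 1 + 1 / H - 2 * κ * ((c ^ 2 + s ^ 2) / (2 * s * c)) := by
    have h2 : (2 * κ) * H = 2 * x := by rw [hxdef]; ring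
    simp only [ILWSymbol, if_neg (by positivity : (2:ℝ) * κ ≠ 0), h2,
      Real.cosh_two_mul, Real.sinh_two_mul, ← hsdef, ← hcdef]
  have hd1 : deriv (ILWSymbol H) κ = -(c / s) + x / s ^ 2 := by
    rw [deriv_ILW_s19 H hH hκ]; simp [ilwD, ← hxdef, ← hsdef, ← hcdef]
  have hd2 : deriv (deriv (ILWSymbol H)) κ = 2 * H / s ^ 2 - 2 * κ * H ^ 2 * c / s ^ 3 := by
    rw [deriv2_ILW_s19 H hH hκ]; simp [ilwDD, ← hxdef, ← hsdef, ← hcdef]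
  -- key positive quantities
  have hP : 2 * x * s < c * (s ^ 2 + x ^ 2) := by nlinarith [sq_nonneg (s - x)]
  have hQ : x ^ 2 + s ^ 2 < 2 * x * c * s := by nlinarith [mul_pos hx hs]
  -- sign of the four factors
  have hA : 2 * κ * deriv (ILWSymbol H) κ + κ ^ 2 * deriv (deriv (ILWSymbol H)) κ < 0 := by
    rw [hd1, hd2]
    have heq : 2 * κ * (-(c / s) + x / s ^ 2) +
        κ ^ 2 * (2 * H / s ^ 2 - 2 * κ * H ^ 2 * c / s ^ 3) =
        2 * κ * (2 * x * s - c * (s ^ 2 + x ^ 2)) / s ^ 3 := by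
      rw [hxdef]; field_simp; ring
    rw [heq]
    apply div_neg_of_neg_of_pos _ (by positivity)
    have : 2 * x * s - c * (s ^ 2 + x ^ 2) < 0 := by linarith
    nlinarith
  have hB : ILWSymbol H κ - 1 + κ * deriv (ILWSymbol H) κ < 0 := by
    rw [hvalκ, hd1]
    have heq : 1 + 1 / H - κ * (c / s) - 1 + κ * (-(c / s) + x / s ^ 2) =
        (s ^ 2 + x ^ 2 - 2 * x * c * s) / (H * s ^ 2) := by
      rw [hxdef]; field_simp; ring
    rw [heq]
    apply div_neg_of_neg_of_pos (by linarith) (by positivity)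
  have hC : 0 < 3 * ILWSymbol H κ - 2 * ILWSymbol H (2 * κ) - 1 + κ * deriv (ILWSymbol H) κ := by
    rw [hvalκ, hval2, hd1]
    have heq : 3 * (1 + 1 / H - κ * (c / s)) -
        2 * (1 + 1 / H - 2 * κ * ((c ^ 2 + s ^ 2) / (2 * s * c))) - 1 +
        κ * (-(c / s) + x / s ^ 2) =
        (c * (s ^ 2 + x ^ 2) - 2 * x * s) / (H * c * s ^ 2) := by
      rw [hxdef]; field_simp
      linear_combination (-(2 * H * κ * s)) * hpyth
    rw [heq]
    apply div_pos (by linarith) (by positivity)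
  have hD : 0 < ILWSymbol H κ - ILWSymbol H (2 * κ) := by
    rw [hvalκ, hval2]
    have heq : 1 + 1 / H - κ * (c / s) -
        (1 + 1 / H - 2 * κ * ((c ^ 2 + s ^ 2) / (2 * s * c))) = κ * s / c := by
      field_simp
      ring
    rw [heq]
    positivity
  -- assemble
  unfold LambdaIndex
  apply le_of_lt
  apply div_pos _ hD
  have hB3 : (ILWSymbol H κ - 1 + κ * deriv (ILWSymbol H) κ) ^ 3 < 0 :=
    Odd.pow_neg ⟨1, by norm_num⟩ hB
  have h1 : 0 < (2 * κ * deriv (ILWSymbol H) κ + κ ^ 2 * deriv (deriv (ILWSymbol H)) κ) *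
      (ILWSymbol H κ - 1 + κ * deriv (ILWSymbol H) κ) ^ 3 :=
    mul_pos_of_neg_of_neg hA hB3
  nlinarith [mul_pos h1 hC]
end
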